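/- arXiv:1509.00864 — 7 statements merged into one kernel-verified Lean document; each statement's English description precedes it below -/
import Mathlib

section
/- There is no composite number n that is a strong probable prime to every base a with gcd(a, n) = 1. That is, for every odd composite n > 1 there exists an integer a coprime to n such that, writing n - 1 = 2^s * d with d odd, a^d ≢ 1 (mod n) and a^(2^k * d) ≢ -1 (mod n) for all 0 ≤ k < s. -/
/-!
Passing the strong test to base `x` forces `x ^ (n - 1) = 1`. If `n = p ^ k` with `k ≥ 2`, the
unit `1 + p` has order `p ^ (k - 1)` modulo `n`, which does not divide `n - 1` since `p ∣ n`.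
Otherwise `n = a * b` with coprime odd `a, b > 1`, and the Chinese remainder theorem gives a unit
`x` with `x ≡ -1 (mod a)` and `x ≡ 1 (mod b)`: then `x ^ d ≡ -1 ≢ 1 (mod a)` for odd `d`, while
every power of `x` is `≡ 1 ≢ -1 (mod b)`.
-/

def StrongPrpCondition {M : Type*} [Monoid M] [HasDistribNeg M] (x : M) (s d : ℕ) : Prop :=
  x ^ d = 1 ∨ ∃ k < s, x ^ (2 ^ k * d) = -1

theorem StrongPrpCondition.pow_eq_one {M : Type*} [Monoid M] [HasDistribNeg M] {x : M} {s d : ℕ}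
    (h : StrongPrpCondition x s d) : x ^ (2 ^ s * d) = 1 := by
  rcases h with h | ⟨k, hk, h⟩
  · rw [pow_mul', h, one_pow]
  · obtain ⟨j, rfl⟩ := Nat.exists_eq_add_of_lt hk
    have : 2 ^ (k + j + 1) * d = 2 ^ k * d * 2 ^ (j + 1) := by ring
    rw [this, pow_mul, h, (Nat.even_pow.2 ⟨even_two, j.succ_ne_zero⟩).neg_one_pow]

theorem not_strongPrpCondition_of_map_eq {R A B : Type*} [Ring R] [Ring A] [Ring B]
    (f : R →+* A × B) {x : R} (hx : f x = (-1, 1)) (hA : (-1 : A) ≠ 1) (hB : (-1 : B) ≠ 1)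
    {s d : ℕ} (hd : Odd d) : ¬ StrongPrpCondition x s d := by
  rintro (h | ⟨k, -, h⟩) <;> apply_fun f at h
  · simp [hx, hd.neg_one_pow, hA] at h
  · simp [hx, Prod.ext_iff, hB.symm] at h

theorem ZMod.one_add_prime_pow_pred_ne_one {p k : ℕ} (hp : p.Prime) (hp2 : p ≠ 2) (hk : 2 ≤ k) :
    (1 + p : ZMod (p ^ k)) ^ (p ^ k - 1) ≠ 1 := by
  obtain ⟨j, rfl⟩ := Nat.exists_eq_add_of_le' hk
  intro h
  have hdvd := orderOf_dvd_of_pow_eq_one h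
  rw [ZMod.orderOf_one_add_prime hp hp2] at hdvd
  have hp_dvd : p ∣ p ^ (j + 1 + 1) - 1 := (dvd_pow_self p j.succ_ne_zero).trans hdvd
  rw [Nat.dvd_sub_iff_right (Nat.one_le_pow _ _ hp.pos) (dvd_pow_self p (by omega))] at hp_dvd
  exact hp.not_dvd_one hp_dvd

theorem ZMod.exists_unit_not_strongPrpCondition_of_prime_pow {p k : ℕ} (hp : p.Prime)
    (hp2 : p ≠ 2) (hk : 2 ≤ k) :
    ∃ x : (ZMod (p ^ k))ˣ, ∀ s d : ℕ, p ^ k - 1 = 2 ^ s * d →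
      ¬ StrongPrpCondition (x : ZMod (p ^ k)) s d := by
  have hunit : IsUnit (1 + p : ZMod (p ^ k)) := by
    exact_mod_cast (ZMod.isUnit_iff_coprime (1 + p) (p ^ k)).2
      ((Nat.coprime_add_self_left.2 (Nat.coprime_one_left p)).pow_right k)
  refine ⟨hunit.unit, fun s d hsd h => ZMod.one_add_prime_pow_pred_ne_one hp hp2 hk ?_⟩
  rw [hsd]
  exact h.pow_eq_one

theorem ZMod.exists_unit_not_strongPrpCondition_of_coprime {a b : ℕ} (hab : a.Coprime b)
    [Fact (2 < a)] [Fact (2 < b)] :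
    ∃ x : (ZMod (a * b))ˣ, ∀ s d : ℕ, Odd d → ¬ StrongPrpCondition (x : ZMod (a * b)) s d := by
  let crt : ZMod (a * b) →+* ZMod a × ZMod b := ZMod.chineseRemainder hab
  have hunit : IsUnit ((ZMod.chineseRemainder hab).symm (-1, 1)) :=
    (Prod.isUnit_iff.2 ⟨isUnit_one.neg, isUnit_one⟩).map _
  exact ⟨hunit.unit, fun s d hd => not_strongPrpCondition_of_map_eq crt (by simp [crt])
    ZMod.neg_one_ne_one ZMod.neg_one_ne_one hd⟩

theorem Nat.exists_coprime_mul_eq_of_not_isPrimePow {n : ℕ} (hn : 1 < n) (h : ¬ IsPrimePow n) :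
    ∃ a b : ℕ, 1 < a ∧ 1 < b ∧ a.Coprime b ∧ a * b = n := by
  have hp := Nat.minFac_prime hn.ne'
  refine ⟨_, _, Nat.one_lt_pow ?_ hp.one_lt, ?_, (Nat.coprime_ordCompl hp (by omega)).pow_left _,
    Nat.ordProj_mul_ordCompl_eq_self n _⟩
  · exact (hp.factorization_pos_of_dvd (by omega) n.minFac_dvd).ne'
  · have hpos := Nat.ordCompl_pos n.minFac (n := n) (by omega)
    have hne : n / n.minFac ^ n.factorization n.minFac ≠ 1 := fun h1 =>
      h ((exists_ordCompl_eq_one_iff_isPrimePow hn.ne').2 ⟨_, hp, h1⟩)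
    omega

theorem stmt_1 (n : ℕ) (hodd : Odd n) (hn : 1 < n) (hcomp : ¬ n.Prime) :
    ∃ a : ℕ, Nat.Coprime a n ∧
      ∀ s d : ℕ, n - 1 = 2 ^ s * d → Odd d →
        ¬ ((a : ZMod n) ^ d = 1 ∨
            ∃ k < s, (a : ZMod n) ^ (2 ^ k * d) = -1) := by
  have : NeZero n := ⟨by omega⟩
  suffices ∃ x : (ZMod n)ˣ, ∀ s d : ℕ, n - 1 = 2 ^ s * d → Odd d →
      ¬ StrongPrpCondition (x : ZMod n) s d by
    obtain ⟨x, hx⟩ := this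
    exact ⟨(x : ZMod n).val, ZMod.val_coe_unit_coprime x, by simpa only [ZMod.natCast_zmod_val]⟩
  by_cases hpp : IsPrimePow n
  · obtain ⟨p, k, hp, hk0, rfl⟩ := (isPrimePow_nat_iff n).1 hpp
    have hp2 : p ≠ 2 := by
      rintro rfl
      exact Nat.not_even_iff_odd.2 hodd (Nat.even_pow.2 ⟨even_two, hk0.ne'⟩)
    have hk : 2 ≤ k := by
      have : k ≠ 1 := by rintro rfl; exact hcomp (by rwa [pow_one])
      omega
    obtain ⟨x, hx⟩ := ZMod.exists_unit_not_strongPrpCondition_of_prime_pow hp hp2 hk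
    exact ⟨x, fun s d hsd _ => hx s d hsd⟩
  · obtain ⟨a, b, ha, hb, hab, rfl⟩ := Nat.exists_coprime_mul_eq_of_not_isPrimePow hn hpp
    have two_lt {m : ℕ} (hm : 1 < m) (hdvd : m ∣ a * b) : Fact (2 < m) := by
      obtain ⟨j, rfl⟩ := hodd.of_dvd_nat hdvd
      exact ⟨by omega⟩
    have := two_lt ha (dvd_mul_right a b)
    have := two_lt hb (dvd_mul_left b a)
    obtain ⟨x, hx⟩ := ZMod.exists_unit_not_strongPrpCondition_of_coprime hab
    exact ⟨x, fun s d _ hd => hx s d hd⟩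
end

section
/- Let n = p₁ ⋯ p_t be a product of t distinct odd primes, and let a be an integer coprime to n. Then n is a strong probable prime to base a if and only if n is a Fermat probable prime to base a (i.e., a^(n-1) ≡ 1 mod n) and v(ord_{p_i}(a)) = v(ord_{p_j}(a)) for all 1 ≤ i, j ≤ t, where v is the 2-adic valuation. -/
lemma aux2 {k d : ℕ} (hd : Odd d) : padicValNat 2 (2 ^ k * d) = k := by
  haveI : Fact (Nat.Prime 2) := ⟨Nat.prime_two⟩
  rw [padicValNat.mul (pow_ne_zero _ two_ne_zero) hd.pos.ne',
    padicValNat.prime_pow, padicValNat.eq_zero_of_not_dvd (by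
      simpa [Nat.odd_iff, Nat.two_dvd_ne_zero] using hd), Nat.add_zero]

lemma aux3 {o m : ℕ} (hm : m ≠ 0) (h : o ∣ m) : padicValNat 2 o ≤ padicValNat 2 m := by
  have ho : o ≠ 0 := fun h0 => hm (Nat.eq_zero_of_zero_dvd (h0 ▸ h))
  rw [← Nat.factorization_def o Nat.prime_two, ← Nat.factorization_def m Nat.prime_two]
  exact (Nat.factorization_le_iff_dvd ho hm).mpr h 2

lemma aux1 {o s d : ℕ} (ho : o ≠ 0) (hd : Odd d) (h : o ∣ 2 ^ s * d) :
    padicValNat 2 o ≤ s ∧ o ∣ 2 ^ padicValNat 2 o * d := by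
  haveI : Fact (Nat.Prime 2) := ⟨Nat.prime_two⟩
  have hle : padicValNat 2 o ≤ s := by
    have := aux3 (Nat.mul_ne_zero (pow_ne_zero _ two_ne_zero) hd.pos.ne') h
    rwa [aux2 hd] at this
  refine ⟨hle, ?_⟩
  have hfac : o.factorization 2 = padicValNat 2 o := Nat.factorization_def o Nat.prime_two
  have hou : 2 ^ padicValNat 2 o * (o / 2 ^ padicValNat 2 o) = o := by
    conv_lhs => rw [← hfac]
    exact Nat.ordProj_mul_ordCompl_eq_self o 2
  have hu2 : ¬ 2 ∣ o / 2 ^ padicValNat 2 o := by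
    rw [← hfac]; exact Nat.not_dvd_ordCompl Nat.prime_two ho
  have hucop : Nat.Coprime (o / 2 ^ padicValNat 2 o) (2 ^ s) :=
    ((Nat.Prime.coprime_iff_not_dvd Nat.prime_two).mpr hu2).symm.pow_right _
  have hud : (o / 2 ^ padicValNat 2 o) ∣ d :=
    hucop.dvd_of_dvd_mul_left ((Dvd.intro_left _ hou).trans h)
  calc o = 2 ^ padicValNat 2 o * (o / 2 ^ padicValNat 2 o) := hou.symm
    _ ∣ 2 ^ padicValNat 2 o * d := mul_dvd_mul_left _ hud

theorem stmt_5 (t : ℕ) (ps : Finset ℕ) (hcard : ps.card = t)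
    (hprime : ∀ p ∈ ps, p.Prime) (hodd : ∀ p ∈ ps, Odd p)
    (n : ℕ) (hn : n = ∏ p ∈ ps, p)
    (a : ℕ) (ha : Nat.Coprime a n)
    (s d : ℕ) (hsd : n - 1 = 2 ^ s * d) (hd : Odd d) :
    ((a : ZMod n) ^ d = 1 ∨ ∃ k < s, (a : ZMod n) ^ (2 ^ k * d) = -1) ↔
      ((a : ZMod n) ^ (n - 1) = 1 ∧
        ∀ p ∈ ps, ∀ q ∈ ps,
          padicValNat 2 (orderOf (a : ZMod p)) =
            padicValNat 2 (orderOf (a : ZMod q))) := by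
  rcases ps.eq_empty_or_nonempty with rfl | ⟨p₀, hp₀⟩
  · simp only [Finset.prod_empty] at hn
    subst hn
    constructor
    · rintro -
      exact ⟨Subsingleton.elim _ _, by simp⟩
    · rintro -
      exact Or.inl (Subsingleton.elim _ _)
  -- basic facts
  have hpn : ∀ p ∈ ps, p ∣ n := fun p hp => hn ▸ Finset.dvd_prod_of_mem _ hp
  have hnpos : 0 < n := hn ▸ Finset.prod_pos fun p hp => (hprime p hp).pos
  haveI : NeZero n := ⟨hnpos.ne'⟩
  -- divisibility over the prime factors
  have hdvd : ∀ z : ℤ, ((n : ℤ) ∣ z ↔ ∀ p ∈ ps, (p : ℤ) ∣ z) := by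
    intro z
    constructor
    · intro h p hp
      exact dvd_trans (Int.natCast_dvd_natCast.mpr (hpn p hp)) h
    · intro h
      rw [← Int.natAbs_dvd_natAbs, Int.natAbs_natCast, hn]
      refine Finset.prod_primes_dvd _ (fun p hp => (hprime p hp).prime) fun p hp => ?_
      rw [← Int.natAbs_natCast p, Int.natAbs_dvd_natAbs]
      exact h p hp
  -- transfer of power equations
  have keyz : ∀ (z : ℤ), ((z : ZMod n) = 0 ↔ ∀ p ∈ ps, (z : ZMod p) = 0) := by
    intro z
    rw [ZMod.intCast_zmod_eq_zero_iff_dvd, hdvd]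
    refine forall₂_congr fun p hp => ?_
    haveI : Fact p.Prime := ⟨hprime p hp⟩
    rw [ZMod.intCast_zmod_eq_zero_iff_dvd]
  have key1 : ∀ m : ℕ, ((a : ZMod n) ^ m = 1 ↔ ∀ p ∈ ps, (a : ZMod p) ^ m = 1) := by
    intro m
    have e : ∀ N : ℕ, [NeZero N] → ((a : ZMod N) ^ m = 1 ↔ (((a : ℤ) ^ m - 1 : ℤ) : ZMod N) = 0) := by
      intro N _
      push_cast
      rw [sub_eq_zero]
    rw [e n, keyz]
    refine forall₂_congr fun p hp => ?_
    haveI : Fact p.Prime := ⟨hprime p hp⟩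
    rw [e p]
  have key2 : ∀ m : ℕ, ((a : ZMod n) ^ m = -1 ↔ ∀ p ∈ ps, (a : ZMod p) ^ m = -1) := by
    intro m
    have e : ∀ N : ℕ, [NeZero N] → ((a : ZMod N) ^ m = -1 ↔ (((a : ℤ) ^ m + 1 : ℤ) : ZMod N) = 0) := by
      intro N _
      push_cast
      rw [add_eq_zero_iff_eq_neg]
    rw [e n, keyz]
    refine forall₂_congr fun p hp => ?_
    haveI : Fact p.Prime := ⟨hprime p hp⟩
    rw [e p]
  -- order facts at each prime
  have hane : ∀ p ∈ ps, (a : ZMod p) ≠ 0 := by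
    intro p hp
    haveI : Fact p.Prime := ⟨hprime p hp⟩
    rw [Ne, ZMod.natCast_eq_zero_iff]
    intro hpa
    exact (hprime p hp).ne_one
      (((Nat.Coprime.coprime_dvd_right (hpn p hp) ha).symm).eq_one_of_dvd hpa)
  have hlt2 : ∀ p ∈ ps, Fact (2 < p) := by
    intro p hp
    exact ⟨lt_of_le_of_ne (hprime p hp).two_le fun h => (Nat.not_odd_iff_even.mpr
      (h ▸ even_two)) (hodd p hp)⟩
  have hone : ∀ p ∈ ps, orderOf (a : ZMod p) ≠ 0 := by
    intro p hp
    haveI : Fact p.Prime := ⟨hprime p hp⟩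
    have h1 : (a : ZMod p) ^ (p - 1) = 1 := ZMod.pow_card_sub_one_eq_one (hane p hp)
    intro h0
    have : (0 : ℕ) ∣ p - 1 := h0 ▸ orderOf_dvd_iff_pow_eq_one.mpr h1
    have := Nat.eq_zero_of_zero_dvd this
    have := (hprime p hp).two_le
    omega
  -- first conjunct of RHS always follows from LHS
  constructor
  · rintro (h1 | ⟨k, hk, hk1⟩)
    · refine ⟨?_, ?_⟩
      · rw [hsd, mul_comm, pow_mul, h1, one_pow]
      · have hv : ∀ p ∈ ps, padicValNat 2 (orderOf (a : ZMod p)) = 0 := by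
          intro p hp
          have ho : orderOf (a : ZMod p) ∣ d :=
            orderOf_dvd_iff_pow_eq_one.mpr ((key1 d).mp h1 p hp)
          exact padicValNat.eq_zero_of_not_dvd fun h2 =>
            (Nat.not_odd_iff_even.mpr (even_iff_two_dvd.mpr (h2.trans ho))) hd
        intro p hp q hq
        rw [hv p hp, hv q hq]
    · have heven : (a : ZMod n) ^ (n - 1) = 1 := by
        have : n - 1 = 2 ^ k * d * 2 ^ (s - k) := by
          rw [hsd]
          conv_lhs => rw [show s = k + (s - k) from by omega]
          rw [pow_add]
          ring
        rw [this, pow_mul, hk1]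
        exact Even.neg_one_pow (even_iff_two_dvd.mpr (dvd_pow_self 2 (by omega)))
      refine ⟨heven, ?_⟩
      have hv : ∀ p ∈ ps, padicValNat 2 (orderOf (a : ZMod p)) = k + 1 := by
        intro p hp
        haveI : Fact p.Prime := ⟨hprime p hp⟩
        haveI := hlt2 p hp
        have hm1 : (a : ZMod p) ^ (2 ^ k * d) = -1 := (key2 _).mp hk1 p hp
        have hsq : (a : ZMod p) ^ (2 ^ (k + 1) * d) = 1 := by
          have : 2 ^ (k + 1) * d = 2 ^ k * d * 2 := by ring
          rw [this, pow_mul, hm1]; ring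
        have hdvd1 : orderOf (a : ZMod p) ∣ 2 ^ (k + 1) * d :=
          orderOf_dvd_iff_pow_eq_one.mpr hsq
        have hnd : ¬ orderOf (a : ZMod p) ∣ 2 ^ k * d := by
          intro hdd
          have := orderOf_dvd_iff_pow_eq_one.mp hdd
          rw [hm1] at this
          exact ZMod.neg_one_ne_one this
        obtain ⟨hle, hdv⟩ := aux1 (hone p hp) hd hdvd1
        rcases Nat.lt_or_ge (padicValNat 2 (orderOf (a : ZMod p))) (k + 1) with h | h
        · exact absurd (hdv.trans (mul_dvd_mul_right
            (pow_dvd_pow 2 (by omega : padicValNat 2 (orderOf (a : ZMod p)) ≤ k)) d)) hnd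
        · omega
      intro p hp q hq
      rw [hv p hp, hv q hq]
  · rintro ⟨h1, hv⟩
    -- common 2-adic valuation
    obtain ⟨v, hvdef⟩ : ∃ v, padicValNat 2 (orderOf (a : ZMod p₀)) = v := ⟨_, rfl⟩
    have hvp : ∀ p ∈ ps, padicValNat 2 (orderOf (a : ZMod p)) = v := fun p hp => hvdef ▸ hv p hp p₀ hp₀
    have hinfo : ∀ p ∈ ps, padicValNat 2 (orderOf (a : ZMod p)) ≤ s ∧
        orderOf (a : ZMod p) ∣ 2 ^ v * d := by
      intro p hp
      have ho : orderOf (a : ZMod p) ∣ 2 ^ s * d := by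
        rw [← hsd]
        exact orderOf_dvd_iff_pow_eq_one.mpr ((key1 _).mp h1 p hp)
      obtain ⟨h2, h3⟩ := aux1 (hone p hp) hd ho
      exact ⟨h2, hvp p hp ▸ h3⟩
    rcases Nat.eq_zero_or_pos v with hv0 | hvpos
    · left
      refine (key1 d).mpr fun p hp => ?_
      refine orderOf_dvd_iff_pow_eq_one.mp ?_
      have := (hinfo p hp).2
      rwa [hv0, pow_zero, one_mul] at this
    · right
      obtain ⟨k, rfl⟩ : ∃ k, v = k + 1 := ⟨v - 1, by omega⟩
      have hks : k < s := by
        have := (hinfo p₀ hp₀).1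
        rw [hvp p₀ hp₀] at this
        omega
      refine ⟨k, hks, (key2 _).mpr fun p hp => ?_⟩
      haveI : Fact p.Prime := ⟨hprime p hp⟩
      haveI := hlt2 p hp
      have hsq : ((a : ZMod p) ^ (2 ^ k * d)) * ((a : ZMod p) ^ (2 ^ k * d)) = 1 := by
        rw [← pow_add]
        refine orderOf_dvd_iff_pow_eq_one.mp ?_
        have : 2 ^ k * d + 2 ^ k * d = 2 ^ (k + 1) * d := by ring
        rw [this]
        exact (hinfo p hp).2
      rcases mul_self_eq_one_iff.mp hsq with hx | hx
      · exfalso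
        have hdd : orderOf (a : ZMod p) ∣ 2 ^ k * d := orderOf_dvd_iff_pow_eq_one.mpr hx
        have := aux3 (Nat.mul_ne_zero (pow_ne_zero _ two_ne_zero) hd.pos.ne') hdd
        rw [aux2 hd, hvp p hp] at this
        omega
      · exact hx
end

section
/- Suppose n = k * p with p prime, p coprime to k, and a is an integer with gcd(a, n) = 1. If a^(n-1) ≡ 1 (mod n), then p divides a^(k-1) - 1. -/
theorem stmt_6 (k p n : ℕ) (hk : 1 < k) (hp : p.Prime) (hpk : ¬ p ∣ k)
    (hn : n = k * p) (a : ℤ) (ha : IsCoprime a (n : ℤ))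
    (hferm : a ^ (n - 1) ≡ 1 [ZMOD (n : ℤ)]) :
    (p : ℤ) ∣ a ^ (k - 1) - 1 := by
  haveI := Fact.mk hp
  have hp2 := hp.two_le
  have hpn : (p : ℤ) ∣ (n : ℤ) := by
    exact_mod_cast (⟨k, by rw [hn, Nat.mul_comm]⟩ : p ∣ n)
  have hcop : IsCoprime a ((p : ℤ)) := ha.of_isCoprime_of_dvd_right hpn
  -- x = a in ZMod p
  set x : ZMod p := (a : ZMod p) with hx
  have hx0 : x ≠ 0 := by
    intro h0
    have hpa : (p : ℤ) ∣ a := by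
      rwa [ZMod.intCast_zmod_eq_zero_iff_dvd] at h0
    have : IsUnit ((p : ℤ)) := hcop.isUnit_of_dvd' hpa dvd_rfl
    rw [Int.isUnit_iff] at this
    omega
  have hferm' : a ^ (n - 1) ≡ 1 [ZMOD (p : ℤ)] := hferm.of_dvd hpn
  have hfp : x ^ (n - 1) = 1 := by
    have := (ZMod.intCast_eq_intCast_iff _ _ _).mpr hferm'
    push_cast at this
    simpa [hx] using this
  have hn1 : 1 ≤ n := by
    rw [hn]; exact Nat.one_le_of_lt (Nat.one_lt_mul_iff.mpr (by omega))
  have hxn : x ^ n = x := by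
    calc x ^ n = x ^ (n - 1) * x := by rw [← pow_succ]; congr 1; omega
    _ = x := by rw [hfp, one_mul]
  have hxk : x ^ k = x := by
    have : x ^ k = (x ^ k) ^ p := (ZMod.pow_card (x ^ k)).symm
    rw [this, ← pow_mul, ← hn, hxn]
  have hk1 : x ^ (k - 1) = 1 := by
    have h : x ^ (k - 1) * x = 1 * x := by
      rw [one_mul, ← pow_succ]
      have : k - 1 + 1 = k := by omega
      rw [this, hxk]
    exact mul_right_cancel₀ hx0 h
  have := (ZMod.intCast_zmod_eq_zero_iff_dvd (a ^ (k - 1) - 1) p).mp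
  apply this
  push_cast
  rw [← hx, hk1, sub_self]
end

section
/- Let n = k * p with p an odd prime not dividing k, let a be coprime to n, and write k - 1 = u * 2^d with u odd. Define h(a,k) = a^u - 1 if v(ord_k(a)) = 0, and h(a,k) = a^(u*2^(c-1)) + 1 if v(ord_k(a)) = c > 0, where ord_k(a) is the multiplicative order of a modulo k and v is the 2-adic valuation. If n is a strong probable prime to base a, then p divides h(a,k). -/
/-- Bleichenbacher's `h(a,k)`: the relevant algebraic factor of `a^(k-1) - 1`,
given `k - 1 = u * 2^d` with `u` odd. -/
noncomputable def bleichH (k : ℕ) (u : ℕ) (a : ℤ) : ℤ :=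
  if padicValNat 2 (orderOf (a : ZMod k)) = 0 then a ^ u - 1
  else a ^ (u * 2 ^ (padicValNat 2 (orderOf (a : ZMod k)) - 1)) + 1

private lemma val2_helper {e j m : ℕ} (hm : Odd m) (h1 : e ∣ 2 ^ (j + 1) * m)
    (h2 : ¬ e ∣ 2 ^ j * m) : padicValNat 2 e = j + 1 := by
  haveI : Fact (Nat.Prime 2) := ⟨Nat.prime_two⟩
  have hm2 : ¬ 2 ∣ m := by
    rw [Nat.odd_iff] at hm; omega
  have hm0 : m ≠ 0 := by rintro rfl; exact hm2 ⟨0, rfl⟩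
  have he0 : e ≠ 0 := by
    rintro rfl
    have := Nat.eq_zero_of_zero_dvd h1
    rcases Nat.mul_eq_zero.mp this with h | h
    · exact absurd h (Nat.pow_pos (by norm_num : 0 < 2)).ne'
    · exact hm0 h
  set v := padicValNat 2 e with hv
  have hub : v ≤ j + 1 := by
    have hdvd : 2 ^ v ∣ 2 ^ (j + 1) * m := dvd_trans pow_padicValNat_dvd h1
    have hcop : Nat.Coprime (2 ^ v) m :=
      Nat.Coprime.pow_left _ ((Nat.prime_two.coprime_iff_not_dvd).mpr hm2)
    have : (2 : ℕ) ^ v ∣ 2 ^ (j + 1) := hcop.dvd_of_dvd_mul_right hdvd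
    exact (Nat.pow_dvd_pow_iff_le_right (by norm_num)).mp this
  have hlb : j + 1 ≤ v := by
    by_contra hle
    push_neg at hle
    have hvle : v ≤ j := Nat.lt_succ_iff.mp hle
    set e' := ordCompl[2] e with he'
    have heq : 2 ^ v * e' = e := by
      have := Nat.ordProj_mul_ordCompl_eq_self e 2
      rwa [Nat.factorization_def e Nat.prime_two] at this
    have he'odd : ¬ 2 ∣ e' := Nat.not_dvd_ordCompl Nat.prime_two he0
    have he'm : e' ∣ m := by
      have h3 : e' ∣ 2 ^ (j + 1) * m := dvd_trans (Nat.ordCompl_dvd e 2) h1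
      exact (Nat.Coprime.pow_right _
        ((Nat.prime_two.coprime_iff_not_dvd).mpr he'odd).symm).dvd_of_dvd_mul_left h3
    exact h2 (heq ▸ mul_dvd_mul (pow_dvd_pow 2 hvle) he'm)
  omega

private lemma order_val2 {R : Type*} [Ring R] {x : R} {j m : ℕ} (hm : Odd m)
    (hx : x ^ (2 ^ j * m) = -1) (hne : (-1 : R) ≠ 1) :
    padicValNat 2 (orderOf x) = j + 1 := by
  apply val2_helper hm
  · apply orderOf_dvd_of_pow_eq_one
    have h : x ^ (2 ^ (j + 1) * m) = (x ^ (2 ^ j * m)) ^ 2 := by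
      rw [← pow_mul]; ring_nf
    rw [h, hx]; norm_num
  · intro hdvd
    have h := orderOf_dvd_iff_pow_eq_one.mp hdvd
    rw [hx] at h
    exact hne h

theorem stmt_7 (k p n : ℕ) (hk : 1 < k) (hp : p.Prime) (hpodd : Odd p) (hpk : ¬ p ∣ k)
    (hn : n = k * p) (u dd : ℕ) (hu : Odd u) (hudd : k - 1 = u * 2 ^ dd)
    (a : ℤ) (ha : IsCoprime a (n : ℤ))
    (s t : ℕ) (ht : Odd t) (hst : n - 1 = 2 ^ s * t)
    (hspp : a ^ t ≡ 1 [ZMOD (n : ℤ)] ∨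
      ∃ j < s, a ^ (2 ^ j * t) ≡ -1 [ZMOD (n : ℤ)]) :
    (p : ℤ) ∣ bleichH k u a := by
  haveI : Fact p.Prime := ⟨hp⟩
  haveI : Fact (Nat.Prime 2) := ⟨Nat.prime_two⟩
  have hp2 : p ≠ 2 := by
    rintro rfl; rw [Nat.odd_iff] at hpodd; omega
  have hp3 : 3 ≤ p := by have := hp.two_le; omega
  haveI : Fact (2 < p) := ⟨by omega⟩
  have hpn : (p : ℤ) ∣ (n : ℤ) := by
    have h : p ∣ n := ⟨k, by rw [hn]; ring⟩
    exact_mod_cast h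
  have hkn : (k : ℤ) ∣ (n : ℤ) := by
    have h : k ∣ n := ⟨p, by rw [hn]⟩
    exact_mod_cast h
  have hap : ¬ (p : ℤ) ∣ a := by
    intro hd
    have h := (ha.of_isCoprime_of_dvd_right hpn).isUnit_of_dvd' hd dvd_rfl
    rw [Int.isUnit_iff] at h
    omega
  have hA0 : (a : ZMod p) ≠ 0 := by
    rw [Ne, ZMod.intCast_zmod_eq_zero_iff_dvd]; exact hap
  set f := orderOf (a : ZMod p) with hf
  set e := orderOf (a : ZMod k) with he
  have hfp1 : f ∣ p - 1 :=
    orderOf_dvd_of_pow_eq_one (ZMod.pow_card_sub_one_eq_one hA0)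
  have hf0 : f ≠ 0 := by
    intro h0
    have := Nat.eq_zero_of_zero_dvd (h0 ▸ hfp1)
    omega
  have hn1 : n - 1 = k * (p - 1) + (k - 1) := by
    obtain ⟨q, rfl⟩ : ∃ q, p = q + 1 := ⟨p - 1, by omega⟩
    subst hn
    have h1 : k * (q + 1) = k * q + k := by ring
    rw [h1, Nat.add_sub_cancel]
    omega
  -- from f ∣ n - 1 deduce f ∣ u * 2 ^ dd
  have hstep : f ∣ n - 1 → f ∣ u * 2 ^ dd := by
    intro hfn
    rw [hn1] at hfn
    have hkp : f ∣ k * (p - 1) := Dvd.dvd.mul_left hfp1 k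
    have : f ∣ k - 1 := (Nat.dvd_add_right hkp).mp hfn
    rwa [hudd] at this
  rcases hspp with h1 | ⟨j, hj, h2⟩
  · -- case a^t ≡ 1
    have hmp : ((a : ZMod p)) ^ t = 1 := by
      have := (ZMod.intCast_eq_intCast_iff _ _ _).mpr (h1.of_dvd hpn)
      push_cast at this
      exact this
    have hmk : ((a : ZMod k)) ^ t = 1 := by
      have := (ZMod.intCast_eq_intCast_iff _ _ _).mpr (h1.of_dvd hkn)
      push_cast at this
      exact this
    have het : e ∣ t := orderOf_dvd_of_pow_eq_one hmk
    have hc : padicValNat 2 e = 0 := by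
      apply padicValNat.eq_zero_of_not_dvd
      intro h2e
      rw [Nat.odd_iff] at ht
      have := h2e.trans het
      omega
    have hft : f ∣ t := orderOf_dvd_of_pow_eq_one hmp
    have hfu : f ∣ u := by
      have hfn : f ∣ n - 1 := hft.trans ⟨2 ^ s, by rw [hst]; ring⟩
      have hfu2 : f ∣ u * 2 ^ dd := hstep hfn
      have hfodd : ¬ 2 ∣ f := by
        intro h2f
        rw [Nat.odd_iff] at ht
        have := h2f.trans hft
        omega
      exact (((Nat.prime_two.coprime_iff_not_dvd).mpr hfodd).symm.pow_right _).dvd_of_dvd_mul_right hfu2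
    have hAu : ((a : ZMod p)) ^ u = 1 := orderOf_dvd_iff_pow_eq_one.mp hfu
    rw [bleichH, ← he, if_pos hc, ← ZMod.intCast_zmod_eq_zero_iff_dvd]
    push_cast
    rw [hAu]
    ring
  · -- case a^(2^j t) ≡ -1
    have hs1 : 1 ≤ s := by omega
    have hn6 : 6 ≤ n := by
      rw [hn]
      calc 6 = 2 * 3 := rfl
        _ ≤ k * p := Nat.mul_le_mul hk hp3
    have hnodd : Odd n := by
      have h2n : 2 ∣ n - 1 := by
        rw [hst]
        have hs2 : (2:ℕ) ^ s = 2 * 2 ^ (s - 1) := by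
          rw [← pow_succ']
          congr 1
          omega
        rw [hs2, mul_assoc]
        exact Dvd.intro _ rfl
      rw [Nat.odd_iff]
      omega
    have hkodd : Odd k := by
      rcases Nat.even_or_odd k with hke | hko
      · exfalso
        rw [hn] at hnodd
        exact (Nat.not_odd_iff_even.mpr (hke.mul_right p)) hnodd
      · exact hko
    have hk3 : 3 ≤ k := by rw [Nat.odd_iff] at hkodd; omega
    haveI : Fact (2 < k) := ⟨by omega⟩
    have hmp : ((a : ZMod p)) ^ (2 ^ j * t) = -1 := by
      have := (ZMod.intCast_eq_intCast_iff _ _ _).mpr (h2.of_dvd hpn)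
      push_cast at this
      exact this
    have hmk : ((a : ZMod k)) ^ (2 ^ j * t) = -1 := by
      have := (ZMod.intCast_eq_intCast_iff _ _ _).mpr (h2.of_dvd hkn)
      push_cast at this
      exact this
    have hck : padicValNat 2 e = j + 1 := order_val2 ht hmk ZMod.neg_one_ne_one
    have hcp : padicValNat 2 f = j + 1 := order_val2 ht hmp ZMod.neg_one_ne_one
    -- f ∣ n - 1
    have hfn : f ∣ n - 1 := by
      have hpow : ((a : ZMod p)) ^ (2 ^ (j + 1) * t) = 1 := by
        have h : ((a : ZMod p)) ^ (2 ^ (j + 1) * t) = (((a : ZMod p)) ^ (2 ^ j * t)) ^ 2 := by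
          rw [← pow_mul]; ring_nf
        rw [h, hmp]; ring
      have hd1 : f ∣ 2 ^ (j + 1) * t := orderOf_dvd_of_pow_eq_one hpow
      have hd2 : (2 : ℕ) ^ (j + 1) * t ∣ 2 ^ s * t :=
        Nat.mul_dvd_mul_right (pow_dvd_pow 2 (by omega)) t
      rw [hst]
      exact hd1.trans hd2
    have hfu2 : f ∣ u * 2 ^ dd := hstep hfn
    have h2j1f : (2 : ℕ) ^ (j + 1) ∣ f := by
      rw [← hcp]; exact pow_padicValNat_dvd
    obtain ⟨f', hf'⟩ := h2j1f
    have hf'odd : ¬ 2 ∣ f' := by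
      intro h2f'
      have : (2 : ℕ) ^ (j + 2) ∣ f := by
        obtain ⟨c, rfl⟩ := h2f'
        exact ⟨c, by rw [hf']; ring⟩
      rw [padicValNat_dvd_iff_le hf0, hcp] at this
      omega
    have hf'u : f' ∣ u := by
      have hd : f' ∣ u * 2 ^ dd := (Dvd.intro_left _ hf'.symm).trans hfu2
      exact (((Nat.prime_two.coprime_iff_not_dvd).mpr hf'odd).symm.pow_right _).dvd_of_dvd_mul_right hd
    have hfdvd : f ∣ u * 2 ^ (j + 1) := by
      rw [hf', mul_comm u]
      exact mul_dvd_mul dvd_rfl hf'u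
    set x := ((a : ZMod p)) ^ (u * 2 ^ j) with hx
    have hxx : x * x = 1 := by
      have : x * x = ((a : ZMod p)) ^ (u * 2 ^ (j + 1)) := by
        rw [hx, ← pow_add]; ring_nf
      rw [this]
      exact orderOf_dvd_iff_pow_eq_one.mp hfdvd
    have hxne : x ≠ 1 := by
      intro hx1
      have hfd : f ∣ u * 2 ^ j := orderOf_dvd_iff_pow_eq_one.mpr hx1
      have : (2 : ℕ) ^ (j + 1) ∣ u * 2 ^ j := (hf' ▸ Dvd.intro f' rfl).trans hfd
      rw [mul_comm u, pow_succ] at this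
      have h2u : (2 : ℕ) ∣ u :=
        (Nat.mul_dvd_mul_iff_left (Nat.pow_pos (by norm_num : 0 < 2))).mp this
      rw [Nat.odd_iff] at hu
      omega
    have hxneg : x = -1 := by
      rcases mul_self_eq_one_iff.mp hxx with h | h
      · exact absurd h hxne
      · exact h
    rw [bleichH, ← he, hck]
    rw [if_neg (by omega)]
    have hj1 : j + 1 - 1 = j := rfl
    rw [hj1, ← ZMod.intCast_zmod_eq_zero_iff_dvd]
    push_cast
    rw [← hx, hxneg]
    ring
end

section
/- Let n = k * p be a strong probable prime simultaneously to bases a₁, ..., a_m, with p prime, p ∤ k, and each aᵢ coprime to n. Then p divides gcd(h(a₁,k), ..., h(a_m,k)), where h is defined from k - 1 = u * 2^d (u odd) by h(a,k) = a^u - 1 if v(ord_k(a)) = 0 and h(a,k) = a^(u*2^(c-1)) + 1 if v(ord_k(a)) = c > 0. -/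
private lemma odd_part_decomp (x : ℕ) (hx : x ≠ 0) :
    ∃ m, Odd m ∧ x = 2 ^ padicValNat 2 x * m := by
  refine ⟨ordCompl[2] x, ?_, ?_⟩
  · have := Nat.not_dvd_ordCompl Nat.prime_two hx
    exact Nat.odd_iff.mpr (by omega)
  · rw [← Nat.factorization_def x Nat.prime_two]
    exact (Nat.ordProj_mul_ordCompl_eq_self x 2).symm

private lemma padic_val_order_eq (x j t : ℕ) (ht : Odd t)
    (h1 : x ∣ 2 ^ (j + 1) * t) (h2 : ¬ x ∣ 2 ^ j * t) :
    padicValNat 2 x = j + 1 := by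
  have ht0 : t ≠ 0 := by rintro rfl; simp [Nat.odd_iff] at ht
  have hx : x ≠ 0 := by
    rintro rfl
    have h0 := Nat.eq_zero_of_zero_dvd h1
    rcases Nat.mul_eq_zero.mp h0 with h | h
    · exact absurd h (by positivity)
    · exact ht0 h
  obtain ⟨m, hmodd, hfac⟩ := odd_part_decomp x hx
  set v := padicValNat 2 x with hv
  have hmx : m ∣ x := hfac ▸ Dvd.intro_left _ rfl
  have hvx : 2 ^ v ∣ x := hfac ▸ Dvd.intro m rfl
  have hvle : v ≤ j + 1 := by
    have hcop : Nat.Coprime (2 ^ v) t := (Nat.coprime_two_left.mpr ht).pow_left v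
    have : 2 ^ v ∣ 2 ^ (j + 1) := hcop.dvd_of_dvd_mul_right (hvx.trans h1)
    exact (Nat.pow_dvd_pow_iff_le_right (by norm_num)).mp this
  have hmt : m ∣ t := by
    have hcop : Nat.Coprime m (2 ^ (j + 1)) :=
      (Nat.coprime_two_right.mpr hmodd).pow_right _
    exact hcop.dvd_of_dvd_mul_left (hmx.trans h1)
  by_contra hne
  have hvj : v ≤ j := by omega
  exact h2 (hfac ▸ mul_dvd_mul (pow_dvd_pow 2 hvj) hmt)

private lemma bleich_key (k p : ℕ) (hk : 1 < k) (hp : p.Prime) (hp2 : 2 < p)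
    (u dd : ℕ) (hu : Odd u) (hudd : k - 1 = u * 2 ^ dd)
    (a : ℤ) (hcop : IsCoprime a ((k * p : ℕ) : ℤ))
    (s t : ℕ) (ht : Odd t) (hst : k * p - 1 = 2 ^ s * t)
    (hspp : a ^ t ≡ 1 [ZMOD ((k * p : ℕ) : ℤ)] ∨
      ∃ j < s, a ^ (2 ^ j * t) ≡ -1 [ZMOD ((k * p : ℕ) : ℤ)]) :
    (p : ℤ) ∣ bleichH k u a := by
  haveI : Fact p.Prime := ⟨hp⟩
  have hpn : (p : ℤ) ∣ ((k * p : ℕ) : ℤ) := by push_cast; exact dvd_mul_left _ _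
  have hkn : (k : ℤ) ∣ ((k * p : ℕ) : ℤ) := by push_cast; exact dvd_mul_right _ _
  have hb : (a : ZMod p) ≠ 0 := by
    intro h
    have hpa : (p : ℤ) ∣ a := (ZMod.intCast_zmod_eq_zero_iff_dvd a p).mp h
    have := hcop.isUnit_of_dvd' hpa hpn
    rw [Int.isUnit_iff] at this
    omega
  set e := orderOf (a : ZMod p) with he
  have he_p : e ∣ p - 1 := ZMod.orderOf_dvd_card_sub_one hb
  have he0 : e ≠ 0 := by
    intro h
    have := Nat.eq_zero_of_zero_dvd (h ▸ he_p)
    omega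
  -- e divides n - 1 in both cases; derive e ∣ u * 2 ^ dd
  have key_dvd : e ∣ 2 ^ s * t → e ∣ u * 2 ^ dd := by
    intro hst'
    have hprod : (k : ℕ) * p = k * (p - 1) + k := by
      have h1 : 1 ≤ p := hp.one_le
      have : k * p = k * (p - 1) + k * 1 := by
        rw [← Nat.mul_add]; congr 1; omega
      omega
    have hnk : k * p - 1 = k * (p - 1) + (k - 1) := by omega
    have he_n : e ∣ k * p - 1 := hst ▸ hst'
    have he_k1 : e ∣ k - 1 := by
      have h2 : e ∣ k * (p - 1) := Dvd.dvd.mul_left he_p k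
      have h3 : (k * p - 1) - k * (p - 1) = k - 1 := by omega
      exact h3 ▸ Nat.dvd_sub he_n h2
    rwa [hudd] at he_k1
  rcases hspp with h1 | ⟨j, hj, h2⟩
  · -- Case 1 : a ^ t ≡ 1 mod n
    have hbp : (a : ZMod p) ^ t = 1 := by
      have := (ZMod.intCast_eq_intCast_iff _ _ _).mpr (h1.of_dvd hpn)
      push_cast at this
      exact this
    have hgk : (a : ZMod k) ^ t = 1 := by
      have := (ZMod.intCast_eq_intCast_iff _ _ _).mpr (h1.of_dvd hkn)
      push_cast at this
      exact this
    have he_t : e ∣ t := orderOf_dvd_of_pow_eq_one hbp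
    have he_odd : Odd e := ht.of_dvd_nat he_t
    have hf_t : orderOf (a : ZMod k) ∣ t := orderOf_dvd_of_pow_eq_one hgk
    have hc : padicValNat 2 (orderOf (a : ZMod k)) = 0 := by
      apply padicValNat.eq_zero_of_not_dvd
      intro hdvd
      have : 2 ∣ t := hdvd.trans hf_t
      rw [Nat.odd_iff] at ht
      omega
    rw [bleichH, if_pos hc]
    rw [← ZMod.intCast_zmod_eq_zero_iff_dvd]
    push_cast
    have he_u : e ∣ u := by
      have hcop2 : Nat.Coprime e (2 ^ dd) :=
        (Nat.coprime_two_right.mpr he_odd).pow_right _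
      exact hcop2.dvd_of_dvd_mul_right (key_dvd (he_t.trans (Dvd.intro_left _ rfl)))
    rw [sub_eq_zero]
    exact orderOf_dvd_iff_pow_eq_one.mp he_u
  · -- Case 2 : a ^ (2^j t) ≡ -1 mod n
    have hN4 : 4 ≤ k * p := by nlinarith
    have hn1 : 2 ∣ k * p - 1 := by
      rw [hst]
      exact Dvd.dvd.mul_right (dvd_pow_self 2 (by omega : s ≠ 0)) t
    have hkodd : ¬ 2 ∣ k := by
      intro hdk
      have : 2 ∣ k * p := hdk.mul_right p
      omega
    haveI : Fact (2 < p) := ⟨hp2⟩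
    haveI : Fact (2 < k) := ⟨by omega⟩
    have hbp : (a : ZMod p) ^ (2 ^ j * t) = -1 := by
      have := (ZMod.intCast_eq_intCast_iff _ _ _).mpr (h2.of_dvd hpn)
      push_cast at this
      exact this
    have hgk : (a : ZMod k) ^ (2 ^ j * t) = -1 := by
      have := (ZMod.intCast_eq_intCast_iff _ _ _).mpr (h2.of_dvd hkn)
      push_cast at this
      exact this
    have hexp : 2 ^ (j + 1) * t = 2 ^ j * t * 2 := by ring
    have he_d1 : e ∣ 2 ^ (j + 1) * t := by
      apply orderOf_dvd_of_pow_eq_one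
      rw [hexp, pow_mul, hbp]
      simp
    have he_nd : ¬ e ∣ 2 ^ j * t := by
      intro h
      exact ZMod.neg_one_ne_one (hbp ▸ orderOf_dvd_iff_pow_eq_one.mp h)
    have hve : padicValNat 2 e = j + 1 := padic_val_order_eq e j t ht he_d1 he_nd
    have hf_d1 : orderOf (a : ZMod k) ∣ 2 ^ (j + 1) * t := by
      apply orderOf_dvd_of_pow_eq_one
      rw [hexp, pow_mul, hgk]
      simp
    have hf_nd : ¬ orderOf (a : ZMod k) ∣ 2 ^ j * t := by
      intro h
      exact ZMod.neg_one_ne_one (hgk ▸ orderOf_dvd_iff_pow_eq_one.mp h)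
    have hc : padicValNat 2 (orderOf (a : ZMod k)) = j + 1 :=
      padic_val_order_eq _ j t ht hf_d1 hf_nd
    rw [bleichH, hc, if_neg (Nat.succ_ne_zero j)]
    simp only [Nat.add_sub_cancel]
    rw [← ZMod.intCast_zmod_eq_zero_iff_dvd]
    push_cast
    -- goal : (a : ZMod p) ^ (u * 2 ^ j) + 1 = 0
    have he_u2 : e ∣ u * 2 ^ dd := key_dvd (he_d1.trans
      (mul_dvd_mul (pow_dvd_pow 2 (by omega)) dvd_rfl))
    -- decompose e
    obtain ⟨m, hmodd, hfac⟩ := odd_part_decomp e he0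
    rw [hve] at hfac
    have hmu : m ∣ u := by
      have hmx : m ∣ e := hfac ▸ Dvd.intro_left _ rfl
      have hcop2 : Nat.Coprime m (2 ^ dd) :=
        (Nat.coprime_two_right.mpr hmodd).pow_right _
      exact hcop2.dvd_of_dvd_mul_right (hmx.trans he_u2)
    have he_dvd : e ∣ 2 ^ (j + 1) * u := hfac ▸ Nat.mul_dvd_mul_left _ hmu
    have hsq : ((a : ZMod p) ^ (u * 2 ^ j)) * ((a : ZMod p) ^ (u * 2 ^ j)) = 1 := by
      rw [← pow_add]
      apply orderOf_dvd_iff_pow_eq_one.mp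
      have : u * 2 ^ j + u * 2 ^ j = 2 ^ (j + 1) * u := by ring
      rw [this]
      exact he_dvd
    have hne1 : (a : ZMod p) ^ (u * 2 ^ j) ≠ 1 := by
      intro h
      have hd : e ∣ u * 2 ^ j := orderOf_dvd_iff_pow_eq_one.mpr h
      have h21 : 2 ^ (j + 1) ∣ e := hfac ▸ Dvd.intro m rfl
      have h22 : 2 ^ (j + 1) ∣ u * 2 ^ j := h21.trans hd
      have hcop3 : Nat.Coprime (2 ^ (j + 1)) u :=
        (Nat.coprime_two_left.mpr hu).pow_left _
      have : 2 ^ (j + 1) ∣ 2 ^ j := hcop3.dvd_of_dvd_mul_left h22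
      have := (Nat.pow_dvd_pow_iff_le_right (by norm_num : (1:ℕ) < 2)).mp this
      omega
    rcases mul_self_eq_one_iff.mp hsq with h | h
    · exact absurd h hne1
    · rw [h]; ring

theorem stmt_8 (k p n : ℕ) (hk : 1 < k) (hp : p.Prime) (hpk : ¬ p ∣ k)
    (hn : n = k * p) (u dd : ℕ) (hu : Odd u) (hudd : k - 1 = u * 2 ^ dd)
    (ν : Finset ℤ) (hcop : ∀ a ∈ ν, IsCoprime a (n : ℤ))
    (s t : ℕ) (ht : Odd t) (hst : n - 1 = 2 ^ s * t)
    (hspp : ∀ a ∈ ν,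
      a ^ t ≡ 1 [ZMOD (n : ℤ)] ∨
        ∃ j < s, a ^ (2 ^ j * t) ≡ -1 [ZMOD (n : ℤ)]) :
    (p : ℤ) ∣ ν.gcd (bleichH k u) := by
  subst hn
  apply Finset.dvd_gcd
  intro a ha
  by_cases hp2 : p = 2
  · subst hp2
    have haodd : Odd a := by
      rw [← Int.not_even_iff_odd, even_iff_two_dvd]
      intro h2a
      have h2n : (2 : ℤ) ∣ ((k * 2 : ℕ) : ℤ) := by push_cast; exact dvd_mul_left _ _
      have := (hcop a ha).isUnit_of_dvd' h2a h2n
      rw [Int.isUnit_iff] at this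
      omega
    rw [bleichH]
    split
    · exact ((haodd.pow).sub_odd odd_one).two_dvd
    · exact ((haodd.pow).add_one).two_dvd
  · have hp2' : 2 < p := by
      have := hp.two_le
      omega
    exact bleich_key k p hk hp hp2' u dd hu hudd a (hcop a ha) s t ht hst (hspp a ha)
end

section
/- Let n = k * p be a Fermat pseudoprime to base a for every a in a set ν (i.e., a^(n-1) ≡ 1 mod n for all a ∈ ν), with p prime and p ∤ k. Let λ = lcm over a ∈ ν of ord_k(a). Then p ≡ k^{-1} (mod λ), i.e., k * p ≡ 1 (mod λ). -/
theorem stmt_9 (k p n : ℕ) (hk : 1 < k) (hp : p.Prime) (hpk : ¬ p ∣ k)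
    (hn : n = k * p) (ν : Finset ℤ) (hcop : ∀ a ∈ ν, IsCoprime a (n : ℤ))
    (hferm : ∀ a ∈ ν, a ^ (n - 1) ≡ 1 [ZMOD (n : ℤ)]) :
    k * p ≡ 1 [MOD ν.lcm (fun a => orderOf (a : ZMod k))] := by
  subst hn
  have hL : ν.lcm (fun a => orderOf (a : ZMod k)) ∣ k * p - 1 := by
    apply Finset.lcm_dvd
    intro a ha
    apply orderOf_dvd_of_pow_eq_one
    have h := hferm a ha
    have hk' : a ^ (k * p - 1) ≡ 1 [ZMOD (k : ℤ)] := by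
      have hdvd : (k : ℤ) ∣ ((k * p : ℕ) : ℤ) := by push_cast; exact dvd_mul_right _ _
      exact (Int.ModEq.of_dvd hdvd h)
    have := (ZMod.intCast_eq_intCast_iff _ _ _).mpr hk'
    push_cast at this
    simpa using this
  have hpos : 1 ≤ k * p :=
    Nat.one_le_iff_ne_zero.mpr (Nat.mul_ne_zero (by omega) hp.pos.ne')
  exact ((Nat.modEq_iff_dvd' hpos).mpr hL).symm
end

section
/- Let p, q be distinct odd primes and a an integer coprime to pq. Set n = pq and write n - 1 = 2^s * d with d odd. If v(ord_p(a)) ≠ v(ord_q(a)), where v is the 2-adic valuation, then n is not a strong probable prime to base a. -/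
lemma aux_val {k d m : ℕ} (hd : Odd d) (h1 : m ∣ 2 ^ (k + 1) * d) (h2 : ¬ m ∣ 2 ^ k * d) :
    padicValNat 2 m = k + 1 := by
  have hd0 : d ≠ 0 := by rintro rfl; simpa using hd
  have hne : (2 ^ (k + 1) * d) ≠ 0 := by positivity
  have hm0 : m ≠ 0 := by rintro rfl; exact hne (zero_dvd_iff.mp h1)
  have hfac := (Nat.factorization_le_iff_dvd hm0 hne).mpr h1 2
  have hdodd : ¬ (2 ∣ d) := by simpa [Nat.odd_iff, Nat.two_dvd_ne_zero] using hd
  rw [Nat.factorization_mul (by positivity) hd0] at hfac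
  simp [Nat.prime_two.factorization_pow, Nat.factorization_eq_zero_of_not_dvd hdodd] at hfac
  rw [← Nat.factorization_def m Nat.prime_two]
  rcases lt_or_eq_of_le hfac with hlt | heq
  · exfalso
    apply h2
    have hcd : ordCompl[2] m ∣ d := by
      have h3 : ordCompl[2] m ∣ 2 ^ (k + 1) * d := (Nat.ordCompl_dvd m 2).trans h1
      exact (Nat.Coprime.pow_right _ ((Nat.coprime_ordCompl Nat.prime_two hm0).symm)).dvd_of_dvd_mul_left h3
    calc m = 2 ^ m.factorization 2 * ordCompl[2] m := (Nat.ordProj_mul_ordCompl_eq_self m 2).symm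
    _ ∣ 2 ^ k * d := mul_dvd_mul (pow_dvd_pow 2 (Nat.lt_succ_iff.mp hlt)) hcd
  · exact heq

theorem stmt_17 (p q : ℕ) (hp : p.Prime) (hq : q.Prime) (hpodd : Odd p) (hqodd : Odd q)
    (hpq : p ≠ q) (n : ℕ) (hn : n = p * q) (a : ℕ) (ha : Nat.Coprime a n)
    (s d : ℕ) (hsd : n - 1 = 2 ^ s * d) (hd : Odd d)
    (hval : padicValNat 2 (orderOf (a : ZMod p)) ≠ padicValNat 2 (orderOf (a : ZMod q))) :
    ¬ ((a : ZMod n) ^ d = 1 ∨ ∃ k < s, (a : ZMod n) ^ (2 ^ k * d) = -1) := by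
  have hp2 : p ≠ 2 := by rintro rfl; simp [Nat.odd_iff] at hpodd
  have hq2 : q ≠ 2 := by rintro rfl; simp [Nat.odd_iff] at hqodd
  have : Fact (2 < p) := ⟨lt_of_le_of_ne hp.two_le (Ne.symm hp2)⟩
  have : Fact (2 < q) := ⟨lt_of_le_of_ne hq.two_le (Ne.symm hq2)⟩
  have hdvdp : p ∣ n := hn ▸ dvd_mul_right p q
  have hdvdq : q ∣ n := hn ▸ dvd_mul_left q p
  have hnot2 : ¬ (2 ∣ d) := by simpa [Nat.odd_iff, Nat.two_dvd_ne_zero] using hd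
  rintro (h | ⟨k, hk, h⟩)
  · have hap := congrArg (ZMod.castHom hdvdp (ZMod p)) h
    have haq := congrArg (ZMod.castHom hdvdq (ZMod q)) h
    simp only [map_pow, map_natCast, map_one] at hap haq
    have h1 := orderOf_dvd_of_pow_eq_one hap
    have h2 := orderOf_dvd_of_pow_eq_one haq
    apply hval
    rw [padicValNat.eq_zero_of_not_dvd (fun hc => hnot2 (hc.trans h1)),
      padicValNat.eq_zero_of_not_dvd (fun hc => hnot2 (hc.trans h2))]
  · have hap := congrArg (ZMod.castHom hdvdp (ZMod p)) h
    have haq := congrArg (ZMod.castHom hdvdq (ZMod q)) h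
    simp only [map_pow, map_natCast, map_neg, map_one] at hap haq
    have hsqp : (a : ZMod p) ^ (2 ^ (k + 1) * d) = 1 := by
      have : 2 ^ (k + 1) * d = 2 ^ k * d * 2 := by ring
      rw [this, pow_mul, hap, neg_one_sq]
    have hsqq : (a : ZMod q) ^ (2 ^ (k + 1) * d) = 1 := by
      have : 2 ^ (k + 1) * d = 2 ^ k * d * 2 := by ring
      rw [this, pow_mul, haq, neg_one_sq]
    have hnp : ¬ orderOf (a : ZMod p) ∣ 2 ^ k * d := fun hc =>
      ZMod.neg_one_ne_one (hap.symm.trans (orderOf_dvd_iff_pow_eq_one.mp hc))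
    have hnq : ¬ orderOf (a : ZMod q) ∣ 2 ^ k * d := fun hc =>
      ZMod.neg_one_ne_one (haq.symm.trans (orderOf_dvd_iff_pow_eq_one.mp hc))
    exact hval ((aux_val hd (orderOf_dvd_of_pow_eq_one hsqp) hnp).trans
      (aux_val hd (orderOf_dvd_of_pow_eq_one hsqq) hnq).symm)
end
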